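/- Let ε ≥ 1 and k ≥ 2, let Γ be an asymmetric coordination game on a finite simple graph G = (V,E) with unit edge weights (w_e = 1 for all e ∈ E), equal-split distribution rule and no individual preferences, and let M ⊆ E be a matching such that S_i ∩ S_j ≠ ∅ for every edge {i,j} ∈ M. Then every (ε,k)-equilibrium s of Γ satisfies u(s) ≥ |M|/(2ε); consequently, if M is nonempty, then u(s*)/u(s) ≤ 2ε·|E|/|M| for every strategy profile s*. -/

import Mathlib

open Finset
open scoped Classical

variable {V : Type*}

noncomputable def edgesIn [Fintype V] (G : SimpleGraph V) (S : Finset V) : ℕ :=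
  (G.edgeFinset.filter fun e => ∀ v ∈ e, v ∈ S).card

noncomputable def maxDensity [Fintype V] (G : SimpleGraph V) : ℝ :=
  ⨆ S : {S : Finset V // S.Nonempty}, (edgesIn G S.1 : ℝ) / (S.1.card : ℝ)

noncomputable def maxDisparity (G : SimpleGraph V) (α : V → V → ℝ) : ℝ :=
  ⨆ p : {p : V × V // G.Adj p.1 p.2}, α p.1.1 p.1.2 / α p.1.2 p.1.1

noncomputable def util [Fintype V] (G : SimpleGraph V) (coord : V → V → Prop)
    (α w : V → V → ℝ) {c : ℕ} (q : V → Fin c → ℝ) (s : V → Fin c) (i : V) : ℝ :=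
  q i (s i) +
    ∑ j ∈ G.neighborFinset i,
      if (coord i j ∧ s i = s j) ∨ (¬ coord i j ∧ s i ≠ s j)
      then α i j / (α i j + α j i) * w i j else 0

noncomputable def welfare [Fintype V] (G : SimpleGraph V) (coord : V → V → Prop)
    (α w : V → V → ℝ) {c : ℕ} (q : V → Fin c → ℝ) (s : V → Fin c) : ℝ :=
  ∑ i, util G coord α w q s i

def IsNash [Fintype V] (G : SimpleGraph V) (coord : V → V → Prop)
    (α w : V → V → ℝ) {c : ℕ} (q : V → Fin c → ℝ) (s : V → Fin c) : Prop :=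
  ∀ (i : V) (k : Fin c),
    util G coord α w q (Function.update s i k) i ≤ util G coord α w q s i

noncomputable def utilA [Fintype V] (G : SimpleGraph V) (w : V → V → ℝ)
    {c : ℕ} (s : V → Fin c) (i : V) : ℝ :=
  ∑ j ∈ G.neighborFinset i, if s i = s j then w i j / 2 else 0

noncomputable def welfareA [Fintype V] (G : SimpleGraph V) (w : V → V → ℝ)
    {c : ℕ} (s : V → Fin c) : ℝ :=
  ∑ i, utilA G w s i

def IsNashA [Fintype V] (G : SimpleGraph V) (w : V → V → ℝ)
    {c : ℕ} (St : V → Finset (Fin c)) (s : V → Fin c) : Prop :=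
  ∀ i, ∀ k ∈ St i, utilA G w (Function.update s i k) i ≤ utilA G w s i

def IsEpsKEq [Fintype V] (G : SimpleGraph V) (w : V → V → ℝ)
    {c : ℕ} (St : V → Finset (Fin c)) (ε : ℝ) (k : ℕ) (s : V → Fin c) : Prop :=
  ∀ K : Finset V, K.Nonempty → K.card ≤ k →
    ∀ s' : V → Fin c, (∀ i ∈ K, s' i ∈ St i) → (∀ i ∉ K, s' i = s i) →
      ∃ j ∈ K, utilA G w s' j ≤ ε * utilA G w s j

def IsGWS (G : SimpleGraph V) (α : V → V → ℝ) : Prop :=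
  ∃ (σ : V → ℕ) (γ : V → ℝ), Function.Injective σ ∧ (∀ i, 0 ≤ γ i) ∧
    ∀ i j, G.Adj i j →
      (α i j = 0 → σ i < σ j) ∧
      (0 < α i j → α i j / (α i j + α j i) = γ i / (γ i + γ j))

def BRStep [Fintype V] (G : SimpleGraph V) (coord : V → V → Prop)
    (α w : V → V → ℝ) {c : ℕ} (q : V → Fin c → ℝ) (s s' : V → Fin c) : Prop :=
  ∃ i, (∀ j, j ≠ i → s' j = s j) ∧
    util G coord α w q s i < util G coord α w q s' i ∧
    ∀ k : Fin c, util G coord α w q (Function.update s i k) i ≤ util G coord α w q s' i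

/-!
If a matching edge `{i, j}` jointly deviates to a strategy in `S_i ∩ S_j`, each endpoint earns at
least `1/2`; since `k ≥ 2` this deviation is blocked, so `ε (u_i(s) + u_j(s)) ≥ 1/2`. The matching
edges are disjoint, so summing gives `ε u(s) ≥ |M|/2`, while `u(s*) ≤ |E|` for every profile.
-/

lemma utilA_nonneg [Fintype V] (G : SimpleGraph V) {w : V → V → ℝ} (hw : ∀ a b, 0 ≤ w a b)
    {c : ℕ} (s : V → Fin c) (i : V) : 0 ≤ utilA G w s i :=
  Finset.sum_nonneg fun j _ => by split_ifs <;> linarith [hw i j]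

lemma half_weight_le_utilA [Fintype V] (G : SimpleGraph V) {w : V → V → ℝ}
    (hw : ∀ a b, 0 ≤ w a b) {c : ℕ} (s : V → Fin c) {i j : V} (hij : G.Adj i j)
    (hs : s i = s j) : w i j / 2 ≤ utilA G w s i := by
  have hle := Finset.single_le_sum (f := fun j' => if s i = s j' then w i j' / 2 else 0)
    (fun j' _ => by split_ifs <;> linarith [hw i j']) ((G.mem_neighborFinset i j).mpr hij)
  beta_reduce at hle
  rwa [if_pos hs] at hle

lemma utilA_one_le_degree [Fintype V] (G : SimpleGraph V) {c : ℕ} (s : V → Fin c) (i : V) :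
    utilA G (fun _ _ => 1) s i ≤ (G.degree i : ℝ) / 2 :=
  calc utilA G (fun _ _ => 1) s i ≤ ∑ _j ∈ G.neighborFinset i, (1 : ℝ) / 2 :=
        Finset.sum_le_sum fun j _ => by split_ifs <;> norm_num
    _ = (G.degree i : ℝ) / 2 := by
        rw [Finset.sum_const, SimpleGraph.card_neighborFinset_eq_degree, nsmul_eq_mul]; ring

lemma welfareA_one_le_card_edgeFinset [Fintype V] (G : SimpleGraph V) {c : ℕ}
    (s : V → Fin c) : welfareA G (fun _ _ => 1) s ≤ (G.edgeFinset.card : ℝ) := by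
  have hdeg : ((∑ i, G.degree i : ℕ) : ℝ) = 2 * G.edgeFinset.card := by
    exact_mod_cast G.sum_degrees_eq_twice_card_edges
  calc welfareA G (fun _ _ => 1) s ≤ ∑ i, (G.degree i : ℝ) / 2 :=
        Finset.sum_le_sum fun i _ => utilA_one_le_degree G s i
    _ = (G.edgeFinset.card : ℝ) := by
        rw [← Finset.sum_div, ← Nat.cast_sum, hdeg]; ring

lemma sum_sum_toFinset_le_of_matching [Fintype V] (M : Finset (Sym2 V))
    (hM : ∀ e ∈ M, ∀ f ∈ M, e ≠ f → ∀ v, v ∈ e → v ∉ f) {f : V → ℝ} (hf : ∀ v, 0 ≤ f v) :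
    ∑ e ∈ M, ∑ v ∈ e.toFinset, f v ≤ ∑ v, f v := by
  have hdisj : (M : Set (Sym2 V)).PairwiseDisjoint Sym2.toFinset := by
    intro e he e' he' hne
    refine Finset.disjoint_left.mpr fun v hv hv' => ?_
    exact hM e he e' he' hne v (Sym2.mem_toFinset.mp hv) (Sym2.mem_toFinset.mp hv')
  rw [← Finset.sum_biUnion hdisj]
  exact Finset.sum_le_univ_sum_of_nonneg hf

lemma IsEpsKEq.one_half_le_mul_utilA_add [Fintype V] {G : SimpleGraph V} {c : ℕ}
    {St : V → Finset (Fin c)} {ε : ℝ} {k : ℕ} {s : V → Fin c}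
    (hs : IsEpsKEq G (fun _ _ => 1) St ε k s) (hε : 0 ≤ ε) (hk : 2 ≤ k) {i j : V}
    (hij : G.Adj i j) (hcommon : (St i ∩ St j).Nonempty) :
    1 / 2 ≤ ε * (utilA G (fun _ _ => 1) s i + utilA G (fun _ _ => 1) s j) := by
  obtain ⟨t, ht⟩ := hcommon
  rw [Finset.mem_inter] at ht
  set s' := Function.update (Function.update s i t) j t
  have hs'i : s' i = t := by simp [s', Function.update_of_ne hij.ne]
  have hs'j : s' j = t := by simp [s']
  have hcard : ({i, j} : Finset V).card ≤ k := (Finset.card_le_two).trans hk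
  obtain ⟨l, hl, hdev⟩ := hs {i, j} (Finset.insert_nonempty _ _) hcard s'
    (by simp only [Finset.mem_insert, Finset.mem_singleton]
        rintro v (rfl | rfl) <;> simp [hs'i, hs'j, ht.1, ht.2])
    (by simp only [Finset.mem_insert, Finset.mem_singleton, not_or]
        rintro v ⟨hvi, hvj⟩
        simp [s', Function.update_of_ne hvi, Function.update_of_ne hvj])
  have hunit : ∀ a b : V, (0 : ℝ) ≤ (fun _ _ => 1) a b := fun _ _ => zero_le_one
  have hgain : 1 / 2 ≤ utilA G (fun _ _ => 1) s' l := by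
    simp only [Finset.mem_insert, Finset.mem_singleton] at hl
    rcases hl with rfl | rfl
    · exact half_weight_le_utilA G hunit s' hij (hs'i.trans hs'j.symm)
    · exact half_weight_le_utilA G hunit s' hij.symm (hs'j.trans hs'i.symm)
  have hpair : utilA G (fun _ _ => 1) s l ≤
      utilA G (fun _ _ => 1) s i + utilA G (fun _ _ => 1) s j := by
    have := utilA_nonneg G hunit s i
    have := utilA_nonneg G hunit s j
    simp only [Finset.mem_insert, Finset.mem_singleton] at hl
    rcases hl with rfl | rfl <;> linarith
  nlinarith

lemma IsEpsKEq.card_matching_div_le_welfareA [Fintype V] {G : SimpleGraph V} {c : ℕ}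
    {St : V → Finset (Fin c)} {ε : ℝ} {k : ℕ} {s : V → Fin c}
    (hs : IsEpsKEq G (fun _ _ => 1) St ε k s) (hε : 0 < ε) (hk : 2 ≤ k)
    (M : Finset (Sym2 V)) (hMsub : ∀ e ∈ M, e ∈ G.edgeFinset)
    (hMmatch : ∀ e ∈ M, ∀ f ∈ M, e ≠ f → ∀ v, v ∈ e → v ∉ f)
    (hMcc : ∀ e ∈ M, ∀ i j, e = Sym2.mk i j → (St i ∩ St j).Nonempty) :
    (M.card : ℝ) / (2 * ε) ≤ welfareA G (fun _ _ => 1) s := by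
  have hedge : ∀ e ∈ M, 1 / 2 ≤ ε * ∑ v ∈ e.toFinset, utilA G (fun _ _ => 1) s v := by
    intro e he
    induction e using Sym2.ind with
    | h i j =>
      have hij : G.Adj i j := SimpleGraph.mem_edgeFinset.mp (hMsub _ he)
      rw [Sym2.toFinset_mk_eq, Finset.sum_pair hij.ne]
      exact hs.one_half_le_mul_utilA_add hε.le hk hij (hMcc _ he i j rfl)
  have hmatch := sum_sum_toFinset_le_of_matching M hMmatch
    (utilA_nonneg G (fun _ _ => zero_le_one) s)
  have hsum : (M.card : ℝ) / 2 ≤ ε * welfareA G (fun _ _ => 1) s :=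
    calc (M.card : ℝ) / 2 = ∑ _e ∈ M, (1 : ℝ) / 2 := by
          rw [Finset.sum_const, nsmul_eq_mul]; ring
      _ ≤ ∑ e ∈ M, ε * ∑ v ∈ e.toFinset, utilA G (fun _ _ => 1) s v :=
          Finset.sum_le_sum hedge
      _ ≤ ε * welfareA G (fun _ _ => 1) s := by
          rw [← Finset.mul_sum]; exact mul_le_mul_of_nonneg_left hmatch hε.le
  rw [div_le_iff₀ (by positivity)]
  linarith

theorem stmt17_general [Fintype V] (G : SimpleGraph V)
    (ε : ℝ) (hε : 1 ≤ ε) (k : ℕ) (hk : 2 ≤ k)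
    (c : ℕ) (St : V → Finset (Fin c))
    (M : Finset (Sym2 V))
    (hMsub : ∀ e ∈ M, e ∈ G.edgeFinset)
    (hMmatch : ∀ e ∈ M, ∀ f ∈ M, e ≠ f → ∀ v, v ∈ e → v ∉ f)
    (hMcc : ∀ e ∈ M, ∀ i j, e = Sym2.mk i j → (St i ∩ St j).Nonempty)
    (s : V → Fin c)
    (hs : IsEpsKEq G (fun _ _ => 1) St ε k s) :
    (M.card : ℝ) / (2 * ε) ≤ welfareA G (fun _ _ => 1) s ∧
      (M.Nonempty → ∀ sstar : V → Fin c, (∀ i, sstar i ∈ St i) →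
        welfareA G (fun _ _ => 1) sstar / welfareA G (fun _ _ => 1) s ≤
          2 * ε * (G.edgeFinset.card : ℝ) / (M.card : ℝ)) := by
  have hε0 : 0 < ε := zero_lt_one.trans_le hε
  have hlow := hs.card_matching_div_le_welfareA hε0 hk M hMsub hMmatch hMcc
  refine ⟨hlow, fun hM sstar _ => ?_⟩
  have hMpos : (0 : ℝ) < M.card := by exact_mod_cast hM.card_pos
  calc welfareA G (fun _ _ => 1) sstar / welfareA G (fun _ _ => 1) s
      ≤ (G.edgeFinset.card : ℝ) / ((M.card : ℝ) / (2 * ε)) :=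
        div_le_div₀ (Nat.cast_nonneg _) (welfareA_one_le_card_edgeFinset G sstar)
          (by positivity) hlow
    _ = 2 * ε * (G.edgeFinset.card : ℝ) / (M.card : ℝ) := by field_simp

theorem stmt17 [Fintype V] (G : SimpleGraph V)
    (ε : ℝ) (hε : 1 ≤ ε) (k : ℕ) (hk : 2 ≤ k)
    (c : ℕ) (St : V → Finset (Fin c)) (hSt : ∀ i, (St i).Nonempty)
    (M : Finset (Sym2 V))
    (hMsub : ∀ e ∈ M, e ∈ G.edgeFinset)
    (hMmatch : ∀ e ∈ M, ∀ f ∈ M, e ≠ f → ∀ v, v ∈ e → v ∉ f)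
    (hMcc : ∀ e ∈ M, ∀ i j, e = Sym2.mk i j → (St i ∩ St j).Nonempty)
    (s : V → Fin c) (hsv : ∀ i, s i ∈ St i)
    (hs : IsEpsKEq G (fun _ _ => 1) St ε k s) :
    (M.card : ℝ) / (2 * ε) ≤ welfareA G (fun _ _ => 1) s ∧
      (M.Nonempty → ∀ sstar : V → Fin c, (∀ i, sstar i ∈ St i) →
        welfareA G (fun _ _ => 1) sstar / welfareA G (fun _ _ => 1) s ≤
          2 * ε * (G.edgeFinset.card : ℝ) / (M.card : ℝ)) :=
  stmt17_general G ε hε k hk c St M hMsub hMmatch hMcc s hs
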